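/- For every a = (a₁,…,aₙ) ∈ 𝔽ⁿ and every F ∈ R = 𝔽[x₁,…,xₙ; σ, δ], there exist unique G₁, G₂, …, Gₙ ∈ R and a unique b ∈ 𝔽 such that F = Σ_{i=1}^n Gᵢ·(xᵢ − aᵢ) + b. -/

import Mathlib

/- Common setup: free multivariate skew polynomial rings over a division ring. -/

open Matrix Finsupp

/-- The underlying left `𝔽`-module of the free multivariate skew polynomial ring:
the free left `𝔽`-module with basis the free monoid on `n` symbols. -/
abbrev SkewPoly (𝔽 : Type*) [DivisionRing 𝔽] (n : ℕ) : Type _ := FreeMonoid (Fin n) →₀ 𝔽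

namespace SkewPoly

variable {𝔽 : Type*} [DivisionRing 𝔽] {n : ℕ}

/-- The variable `xᵢ` as a skew polynomial. -/
noncomputable def X (𝔽 : Type*) [DivisionRing 𝔽] {n : ℕ} (i : Fin n) : SkewPoly 𝔽 n :=
  Finsupp.single (FreeMonoid.of i) 1

/-- The constant `a` as a skew polynomial (coefficient on the empty word). -/
noncomputable def C {𝔽 : Type*} [DivisionRing 𝔽] (n : ℕ) (a : 𝔽) :
    SkewPoly 𝔽 n := Finsupp.single 1 a

/-- The degree of a skew polynomial: the maximal length of a word in its support
(`⊥` for the zero polynomial). -/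
noncomputable def deg (F : SkewPoly 𝔽 n) : WithBot ℕ :=
  F.support.sup fun m => ((FreeMonoid.length m : ℕ) : WithBot ℕ)

/-- A matrix morphism `σ : 𝔽 → Mₙ(𝔽)`: a unital ring homomorphism. -/
def IsMatrixMorphism (σ : 𝔽 → Matrix (Fin n) (Fin n) 𝔽) : Prop :=
  σ 1 = 1 ∧ (∀ a b : 𝔽, σ (a + b) = σ a + σ b) ∧ (∀ a b : 𝔽, σ (a * b) = σ a * σ b)

/-- A `σ`-vector derivation `δ : 𝔽 → 𝔽ⁿ`: additive with `δ(ab) = σ(a)δ(b) + δ(a)b`. -/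
def IsVectorDerivation (σ : 𝔽 → Matrix (Fin n) (Fin n) 𝔽) (δ : 𝔽 → Fin n → 𝔽) : Prop :=
  (∀ a b : 𝔽, δ (a + b) = δ a + δ b) ∧
    (∀ a b : 𝔽, δ (a * b) = σ a *ᵥ δ b + fun i => δ a i * b)

/-- A multiplication on the free module `SkewPoly 𝔽 n` making it a ring (with the
existing addition) whose identity is the empty word, which restricts to concatenation
on monomials, is additive on degrees of nonzero elements, and for which left
multiplication by constants is scalar multiplication. -/
structure RawMul (𝔽 : Type*) [DivisionRing 𝔽] (n : ℕ) where
  /-- the multiplication -/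
  mul : SkewPoly 𝔽 n → SkewPoly 𝔽 n → SkewPoly 𝔽 n
  mul_add : ∀ F G H : SkewPoly 𝔽 n, mul F (G + H) = mul F G + mul F H
  add_mul : ∀ F G H : SkewPoly 𝔽 n, mul (F + G) H = mul F H + mul G H
  mul_assoc : ∀ F G H : SkewPoly 𝔽 n, mul (mul F G) H = mul F (mul G H)
  one_mul : ∀ F : SkewPoly 𝔽 n, mul (C n 1) F = F
  mul_one : ∀ F : SkewPoly 𝔽 n, mul F (C n 1) = F
  mono_mul_mono : ∀ m m' : FreeMonoid (Fin n),
    mul (Finsupp.single m 1) (Finsupp.single m' 1) = Finsupp.single (m * m') 1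
  const_mul : ∀ (a : 𝔽) (F : SkewPoly 𝔽 n), mul (C n a) F = a • F
  deg_mul : ∀ F G : SkewPoly 𝔽 n, F ≠ 0 → G ≠ 0 → deg (mul F G) = deg F + deg G

/-- The multiplication `S` satisfies the commutation rule
`xᵢ a = Σⱼ σ_{i,j}(a) xⱼ + δᵢ(a)`. -/
def HasCommRule (S : RawMul 𝔽 n) (σ : 𝔽 → Matrix (Fin n) (Fin n) 𝔽)
    (δ : 𝔽 → Fin n → 𝔽) : Prop :=
  ∀ (i : Fin n) (a : 𝔽),
    S.mul (X 𝔽 i) (C n a) =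
      (∑ j : Fin n, Finsupp.single (FreeMonoid.of j) (σ a i j)) + C n (δ a i)

/-- `F = Σᵢ Gᵢ (xᵢ - aᵢ) + b`, i.e. `b` is a remainder of `F` upon right division
by `x₁ - a₁, …, xₙ - aₙ`; equivalently `F - b` lies in the left ideal generated by
the `xᵢ - aᵢ`. -/
def Decomposes (S : RawMul 𝔽 n) (a : Fin n → 𝔽) (F : SkewPoly 𝔽 n) (b : 𝔽) : Prop :=
  ∃ G : Fin n → SkewPoly 𝔽 n,
    F = (∑ i : Fin n, S.mul (G i) (X 𝔽 i - C n (a i))) + C n b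

/-- The evaluation of `F` at the point `a`: the unique `b ∈ 𝔽` such that `F - b`
lies in the left ideal generated by `x₁ - a₁, …, xₙ - aₙ`. -/
noncomputable def eval (S : RawMul 𝔽 n) (a : Fin n → 𝔽) (F : SkewPoly 𝔽 n) : 𝔽 :=
  letI := Classical.propDecidable (∃ b : 𝔽, Decomposes S a F b)
  if h : ∃ b : 𝔽, Decomposes S a F b then h.choose else 0

/-- The `(σ,δ)`-conjugate `a^c = σ(c) a c⁻¹ + δ(c) c⁻¹` of `a` with respect to `c`. -/
noncomputable def conj (σ : 𝔽 → Matrix (Fin n) (Fin n) 𝔽) (δ : 𝔽 → Fin n → 𝔽)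
    (a : Fin n → 𝔽) (c : 𝔽) : Fin n → 𝔽 :=
  fun i => (σ c *ᵥ a) i * c⁻¹ + δ c i * c⁻¹

/-- `I(Ω)`: the set of skew polynomials vanishing at every point of `Ω`. -/
def zeroIdeal (S : RawMul 𝔽 n) (Ω : Set (Fin n → 𝔽)) : Set (SkewPoly 𝔽 n) :=
  {F | ∀ a ∈ Ω, eval S a F = 0}

/-- The left ideal of `SkewPoly 𝔽 n` generated by `x₁ - a₁, …, xₙ - aₙ`
(the set of sums of left multiples of the generators). -/
def pointIdeal (S : RawMul 𝔽 n) (a : Fin n → 𝔽) : Set (SkewPoly 𝔽 n) :=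
  {F | ∃ G : Fin n → SkewPoly 𝔽 n, F = ∑ i : Fin n, S.mul (G i) (X 𝔽 i - C n (a i))}

/-- The P-closure `Ω̄ = Z(I(Ω))` of a set of points `Ω`. -/
def pClosure (S : RawMul 𝔽 n) (Ω : Set (Fin n → 𝔽)) : Set (Fin n → 𝔽) :=
  {a | ∀ F ∈ zeroIdeal S Ω, eval S a F = 0}

/-- `Ω` is P-closed if it equals its P-closure. -/
def IsPClosed (S : RawMul 𝔽 n) (Ω : Set (Fin n → 𝔽)) : Prop := pClosure S Ω = Ω

/-- `B` is P-independent: no point of `B` lies in the P-closure of the rest. -/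
def PIndep (S : RawMul 𝔽 n) (B : Set (Fin n → 𝔽)) : Prop :=
  ∀ a ∈ B, a ∉ pClosure S (B \ {a})

/-- `B` is a P-basis of `Ω`: a P-independent subset of `Ω` whose P-closure is `Ω`. -/
def IsPBasis (S : RawMul 𝔽 n) (B Ω : Set (Fin n → 𝔽)) : Prop :=
  B ⊆ Ω ∧ PIndep S B ∧ pClosure S B = Ω

/-- `Ω` is finitely generated: it is the P-closure of a finite subset of itself. -/
def FinGen (S : RawMul 𝔽 n) (Ω : Set (Fin n → 𝔽)) : Prop :=
  ∃ G : Set (Fin n → 𝔽), G.Finite ∧ G ⊆ Ω ∧ pClosure S G = Ω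

/-- The rank of a P-closed set: the (common) cardinality of its P-bases. -/
noncomputable def pRank (S : RawMul 𝔽 n) (Ω : Set (Fin n → 𝔽)) : ℕ :=
  sInf {k : ℕ | ∃ B : Finset (Fin n → 𝔽), IsPBasis S ↑B Ω ∧ B.card = k}

/-- The image of the evaluation map `E_Ω : R → 𝔽^Ω`, as a left `𝔽`-subspace of `𝔽^Ω`
(the span of the image; the image is itself a subspace since evaluation is left linear). -/
noncomputable def evalSpan (S : RawMul 𝔽 n) (Ω : Set (Fin n → 𝔽)) :
    Submodule 𝔽 (↥Ω → 𝔽) :=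
  Submodule.span 𝔽 (Set.range fun F : SkewPoly 𝔽 n => fun a : ↥Ω => eval S ↑a F)

/-- `I` is a two-sided ideal with respect to the multiplication `S`. -/
def IsTwoSidedIdealSet (S : RawMul 𝔽 n) (I : Set (SkewPoly 𝔽 n)) : Prop :=
  (0 : SkewPoly 𝔽 n) ∈ I ∧ (∀ F ∈ I, ∀ G ∈ I, F + G ∈ I) ∧ (∀ F ∈ I, -F ∈ I) ∧
    (∀ F ∈ I, ∀ G : SkewPoly 𝔽 n, S.mul G F ∈ I) ∧
    (∀ F ∈ I, ∀ G : SkewPoly 𝔽 n, S.mul F G ∈ I)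


/-- The left row-rank of the skew Vandermonde matrix `V_d(G)`: the dimension of the
left `𝔽`-span of its rows `(N_m(c))_{c ∈ G}`, indexed by the words `m` of length `< d`,
where `N_m(c)` is the evaluation of the monomial `m` at the point `c`. -/
noncomputable def vandermondeRank (S : RawMul 𝔽 n) (G : Finset (Fin n → 𝔽)) (d : ℕ) :
    Cardinal :=
  Module.rank 𝔽 ↥(Submodule.span 𝔽 (Set.range
    fun m : {m : FreeMonoid (Fin n) // FreeMonoid.length m < d} =>
      fun c : ↥G => eval S ↑c (Finsupp.single (m : FreeMonoid (Fin n)) (1 : 𝔽))))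

end SkewPoly

open SkewPoly

/-! The map `(G, b) ↦ Σᵢ Gᵢ(xᵢ - aᵢ) + b` is `𝔽`-linear and bijective. It is onto because a
word `m'xᵢ` equals `m'(xᵢ - aᵢ) + m'aᵢ`, where by additivity of degrees `m'aᵢ` only involves
words shorter than `m'xᵢ`; induct on the length. It is one-to-one because, for a longest word
`m₀` occurring in some `Gⱼ`, the coefficient of `m₀xⱼ` in `Σᵢ Gᵢ(xᵢ - aᵢ) + b` is `Gⱼ(m₀)`:
the terms `Gᵢaᵢ` and `b` only involve shorter words, and `Gᵢxᵢ` only words ending in `xᵢ`. -/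

theorem FreeMonoid.eq_one_or_exists_eq_mul_of {α : Type*} (m : FreeMonoid α) :
    m = 1 ∨ ∃ m' i, m = m' * FreeMonoid.of i := by
  rcases (FreeMonoid.toList m).eq_nil_or_concat with h | ⟨l, x, h⟩
  · exact .inl (FreeMonoid.toList.injective h)
  · exact .inr ⟨FreeMonoid.ofList l, x, FreeMonoid.toList.injective (by simp [h])⟩

theorem FreeMonoid.mul_of_inj {α : Type*} {m m' : FreeMonoid α} {i i' : α} :
    m * FreeMonoid.of i = m' * FreeMonoid.of i' ↔ m = m' ∧ i = i' := by
  rw [← FreeMonoid.toList.injective.eq_iff]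
  simp only [FreeMonoid.toList_mul, FreeMonoid.toList_of, ← List.concat_eq_append,
    List.concat_inj, FreeMonoid.toList.injective.eq_iff]

namespace SkewPoly

variable {𝔽 : Type*} [DivisionRing 𝔽] {n : ℕ}

theorem deg_le_iff {F : SkewPoly 𝔽 n} {d : ℕ} :
    deg F ≤ d ↔ ∀ m ∈ F.support, FreeMonoid.length m ≤ d := by
  simp [deg, Finset.sup_le_iff]

theorem apply_eq_zero_of_deg_le_of_lt {F : SkewPoly 𝔽 n} {d : ℕ} (h : deg F ≤ d)
    {w : FreeMonoid (Fin n)} (hw : d < FreeMonoid.length w) : F w = 0 :=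
  Finsupp.notMem_support_iff.mp fun hmem => (deg_le_iff.mp h w hmem).not_gt hw

theorem deg_single_le (m : FreeMonoid (Fin n)) (c : 𝔽) :
    deg (Finsupp.single m c : SkewPoly 𝔽 n) ≤ FreeMonoid.length m :=
  deg_le_iff.mpr fun _ hm' => by rw [Finset.mem_singleton.mp (Finsupp.support_single_subset hm')]

theorem deg_C_le (c : 𝔽) : deg (C n c) ≤ 0 :=
  deg_single_le 1 c

theorem mem_of_forall_single_one_mem {P : Submodule 𝔽 (SkewPoly 𝔽 n)} {F : SkewPoly 𝔽 n}
    (h : ∀ m ∈ F.support, Finsupp.single m 1 ∈ P) : F ∈ P := by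
  rw [← F.sum_single]
  refine Submodule.sum_mem _ fun m hm => ?_
  simpa [Finsupp.smul_single'] using P.smul_mem (F m) (h m hm)

namespace RawMul

variable (S : RawMul 𝔽 n)

theorem mul_zero (F : SkewPoly 𝔽 n) : S.mul F 0 = 0 := by
  simpa using S.mul_add F 0 0

theorem zero_mul (F : SkewPoly 𝔽 n) : S.mul 0 F = 0 := by
  simpa using S.add_mul 0 0 F

theorem mul_sub (F G H : SkewPoly 𝔽 n) : S.mul F (G - H) = S.mul F G - S.mul F H := by
  rw [eq_sub_iff_add_eq, ← S.mul_add, sub_add_cancel]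

theorem sub_mul (F G H : SkewPoly 𝔽 n) : S.mul (F - G) H = S.mul F H - S.mul G H := by
  rw [eq_sub_iff_add_eq, ← S.add_mul, sub_add_cancel]

theorem smul_mul (c : 𝔽) (F G : SkewPoly 𝔽 n) : S.mul (c • F) G = c • S.mul F G := by
  rw [← S.const_mul c F, S.mul_assoc, S.const_mul]

theorem single_mul_X (m : FreeMonoid (Fin n)) (c : 𝔽) (i : Fin n) :
    S.mul (Finsupp.single m c) (X 𝔽 i) = Finsupp.single (m * FreeMonoid.of i) c := by
  have := S.smul_mul c (Finsupp.single m 1) (X 𝔽 i)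
  rwa [X, S.mono_mul_mono, Finsupp.smul_single_one, Finsupp.smul_single_one] at this

theorem mul_X (G : SkewPoly 𝔽 n) (i : Fin n) :
    S.mul G (X 𝔽 i) = G.mapDomain (· * FreeMonoid.of i) := by
  induction G using Finsupp.induction with
  | zero => rw [S.zero_mul, Finsupp.mapDomain_zero]
  | single_add m c G _ _ ih =>
    rw [S.add_mul, ih, Finsupp.mapDomain_add, Finsupp.mapDomain_single, S.single_mul_X]

theorem mul_X_apply_mul_of (G : SkewPoly 𝔽 n) (i j : Fin n) (m : FreeMonoid (Fin n)) :
    S.mul G (X 𝔽 i) (m * FreeMonoid.of j) = if j = i then G m else 0 := by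
  rw [S.mul_X]
  split_ifs with hji
  · subst hji
    exact Finsupp.mapDomain_apply (mul_left_injective _) G m
  · refine Finsupp.mapDomain_of_notMem_range _ _ ?_
    rintro ⟨m', hm'⟩
    exact hji (FreeMonoid.mul_of_inj.mp hm').2.symm

theorem deg_mul_C_le (F : SkewPoly 𝔽 n) (c : 𝔽) : deg (S.mul F (C n c)) ≤ deg F := by
  by_cases hF : F = 0
  · rw [hF, S.zero_mul]
  by_cases hc : c = 0
  · rw [hc, C, Finsupp.single_zero, S.mul_zero]
    exact bot_le
  calc deg (S.mul F (C n c)) = deg F + deg (C n c) :=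
        S.deg_mul F _ hF (by simpa [C] using hc)
    _ ≤ deg F + 0 := add_le_add_right (deg_C_le c) _
    _ = deg F := add_zero _

end RawMul

variable (S : RawMul 𝔽 n) (a : Fin n → 𝔽)

noncomputable def divisionMap : ((Fin n → SkewPoly 𝔽 n) × 𝔽) →ₗ[𝔽] SkewPoly 𝔽 n where
  toFun p := (∑ i, S.mul (p.1 i) (X 𝔽 i - C n (a i))) + C n p.2
  map_add' p q := by
    simp only [Prod.fst_add, Prod.snd_add, Pi.add_apply, S.add_mul, Finset.sum_add_distrib, C,
      Finsupp.single_add]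
    abel
  map_smul' c p := by
    simp only [Prod.smul_fst, Prod.smul_snd, Pi.smul_apply, S.smul_mul, smul_add,
      Finset.smul_sum, C, Finsupp.smul_single', smul_eq_mul, RingHom.id_apply]

theorem divisionMap_apply (p : (Fin n → SkewPoly 𝔽 n) × 𝔽) :
    divisionMap S a p = (∑ i, S.mul (p.1 i) (X 𝔽 i - C n (a i))) + C n p.2 :=
  rfl

theorem divisionMap_single (i : Fin n) (H : SkewPoly 𝔽 n) :
    divisionMap S a (Pi.single i H, 0) = S.mul H (X 𝔽 i - C n (a i)) := by
  rw [divisionMap_apply, Finset.sum_eq_single_of_mem i (Finset.mem_univ i) fun j _ hj => by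
    simp [hj, S.zero_mul]]
  simp [C]

theorem single_one_mem_range_divisionMap (m : FreeMonoid (Fin n)) :
    Finsupp.single m 1 ∈ LinearMap.range (divisionMap S a) := by
  induction hd : FreeMonoid.length m using Nat.strong_induction_on generalizing m with
  | _ d ih =>
    rcases m.eq_one_or_exists_eq_mul_of with rfl | ⟨m', i, rfl⟩
    · exact ⟨(0, 1), by simp [divisionMap_apply, S.zero_mul, C]⟩
    have hm' : FreeMonoid.length m' < d := by
      simp [← hd, FreeMonoid.length_mul, FreeMonoid.length_of]
    rw [← S.single_mul_X, ← sub_add_cancel (X 𝔽 i) (C n (a i)), S.mul_add]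
    refine Submodule.add_mem _ ⟨_, divisionMap_single S a i _⟩
      (mem_of_forall_single_one_mem fun w hw => ih _ ?_ w rfl)
    have hdeg := (S.deg_mul_C_le (Finsupp.single m' 1) (a i)).trans (deg_single_le m' 1)
    exact (deg_le_iff.mp hdeg w hw).trans_lt hm'

theorem divisionMap_surjective : Function.Surjective (divisionMap S a) :=
  LinearMap.range_eq_top.mp <| eq_top_iff.mpr fun _ _ =>
    mem_of_forall_single_one_mem fun m _ => single_one_mem_range_divisionMap S a m

theorem divisionMap_apply_mul_of {G : Fin n → SkewPoly 𝔽 n} {d : ℕ} (hG : ∀ i, deg (G i) ≤ d)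
    (b : 𝔽) {m : FreeMonoid (Fin n)} (hm : FreeMonoid.length m = d) (j : Fin n) :
    divisionMap S a (G, b) (m * FreeMonoid.of j) = G j m := by
  have hlen : d < FreeMonoid.length (m * FreeMonoid.of j) := by
    simp [FreeMonoid.length_mul, FreeMonoid.length_of, hm]
  have hC : C n b (m * FreeMonoid.of j) = 0 :=
    apply_eq_zero_of_deg_le_of_lt ((deg_C_le b).trans (Nat.cast_le.mpr d.zero_le)) hlen
  have hGC (i : Fin n) : S.mul (G i) (C n (a i)) (m * FreeMonoid.of j) = 0 :=
    apply_eq_zero_of_deg_le_of_lt ((S.deg_mul_C_le _ _).trans (hG i)) hlen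
  simp only [divisionMap_apply, Finsupp.add_apply, Finsupp.finsetSum_apply, S.mul_sub,
    Finsupp.sub_apply, S.mul_X_apply_mul_of, hGC, hC, sub_zero, add_zero,
    Finset.sum_ite_eq, Finset.mem_univ, if_true]

theorem divisionMap_injective : Function.Injective (divisionMap S a) := by
  classical
  refine (injective_iff_map_eq_zero _).mpr fun ⟨G, b⟩ h => ?_
  have hG : G = 0 := by
    by_contra hG
    obtain ⟨i₀, hi₀⟩ := Function.ne_iff.mp hG
    set T := Finset.univ.biUnion fun i => (G i).support
    have hT : T.Nonempty := by
      obtain ⟨m, hm⟩ := Finsupp.support_nonempty_iff.mpr hi₀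
      exact ⟨m, Finset.mem_biUnion.mpr ⟨i₀, Finset.mem_univ _, hm⟩⟩
    obtain ⟨m₀, hm₀T, hmax⟩ := Finset.exists_max_image T FreeMonoid.length hT
    obtain ⟨j, -, hm₀⟩ := Finset.mem_biUnion.mp hm₀T
    have hGd (i : Fin n) : deg (G i) ≤ FreeMonoid.length m₀ := deg_le_iff.mpr fun m hm =>
      hmax m (Finset.mem_biUnion.mpr ⟨i, Finset.mem_univ _, hm⟩)
    have := divisionMap_apply_mul_of S a hGd b rfl j
    rw [h, Finsupp.coe_zero, Pi.zero_apply] at this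
    exact Finsupp.mem_support_iff.mp hm₀ this.symm
  subst hG
  simpa [divisionMap_apply, S.zero_mul, C] using h

end SkewPoly

theorem stmt1_general {𝔽 : Type*} [DivisionRing 𝔽] {n : ℕ}
    (S : RawMul 𝔽 n)
    (a : Fin n → 𝔽) (F : SkewPoly 𝔽 n) :
    ∃! p : (Fin n → SkewPoly 𝔽 n) × 𝔽,
      F = (∑ i : Fin n, S.mul (p.1 i) (X 𝔽 i - C n (a i))) + C n p.2 := by
  simpa only [eq_comm, divisionMap_apply] using
    (Function.Bijective.existsUnique ⟨divisionMap_injective S a, divisionMap_surjective S a⟩ F)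

/-- Unique Euclidean division: for every point `a` and every skew
polynomial `F` there are unique `G₁, …, Gₙ` and `b` with `F = Σᵢ Gᵢ(xᵢ - aᵢ) + b`. -/
theorem stmt1 {𝔽 : Type*} [DivisionRing 𝔽] {n : ℕ} (hn : 0 < n)
    (σ : 𝔽 → Matrix (Fin n) (Fin n) 𝔽) (δ : 𝔽 → Fin n → 𝔽)
    (hσ : IsMatrixMorphism σ) (hδ : IsVectorDerivation σ δ)
    (S : RawMul 𝔽 n) (hS : HasCommRule S σ δ)
    (a : Fin n → 𝔽) (F : SkewPoly 𝔽 n) :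
    ∃! p : (Fin n → SkewPoly 𝔽 n) × 𝔽,
      F = (∑ i : Fin n, S.mul (p.1 i) (X 𝔽 i - C n (a i))) + C n p.2 :=
  stmt1_general S a F
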